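/- For every integer M ≥ 1 and every γ̃ with 0 < γ̃ < 1/M², there exist κ ∈ (0,1) satisfying 4√(1+κ²)·K(κ) = 2π/(M√γ̃) and a nonconstant periodic solution u : ℝ → ℝ of the stationary Ginzburg–Landau equation γ̃ u″(φ) = u(φ)³ − u(φ) of period 2π/M, whose amplitude satisfies max_φ u(φ) = √(2κ²/(1+κ²)). -/

import Mathlib

/-!
The solution is a rescaled Jacobi sine, `u(φ) = A sn(cφ, κ)` with `A² = 2κ²/(1+κ²)` and
`c² = 1/(γ̃(1+κ²))`: the differential equation `sn'' = 2κ² sn³ − (1+κ²) sn` turns into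
`γ̃ u'' = u³ − u`. Here `sn = sin ∘ am`, where the amplitude `am` inverts the incomplete
elliptic integral `F(θ) = ∫₀^θ (1 − κ² sin² t)^{-1/2} dt`; since the integrand is `π`-periodic
and symmetric about `π/2`, `F(θ + 2π) = F(θ) + 4K(κ)`, so `sn` has period `4K(κ)` and maximum
`sn(K) = 1`. The period of `u` is `4K(κ)/c = 2π/M` exactly when `4√(1+κ²)K(κ) = 2π/(M√γ̃)`.
The left side is continuous in `κ ∈ [0,1)`, equals `2π` at `κ = 0` and tends to `∞` as `κ → 1`
(because `K(κ) ≥ arsinh(π/(2√(1−κ²)))`), while the right side exceeds `2π` since `M²γ̃ < 1`;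
the intermediate value theorem gives `κ`.
-/

/-- Complete elliptic integral of the first kind,
`K(κ) = ∫₀^{π/2} (1 − κ² sin²t)^{−1/2} dt`. -/
noncomputable def ellK (κ : ℝ) : ℝ :=
  ∫ t in (0:ℝ)..(Real.pi/2), 1 / Real.sqrt (1 - κ^2 * Real.sin t ^ 2)

/-- Complete elliptic integral of the second kind,
`E(κ) = ∫₀^{π/2} (1 − κ² sin²t)^{1/2} dt`. -/
noncomputable def ellE (κ : ℝ) : ℝ :=
  ∫ t in (0:ℝ)..(Real.pi/2), Real.sqrt (1 - κ^2 * Real.sin t ^ 2)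

open Real Filter Topology Set intervalIntegral

namespace JacobiElliptic

noncomputable section

def ellDelta (κ θ : ℝ) : ℝ := √(1 - κ ^ 2 * sin θ ^ 2)

variable {κ : ℝ}

lemma one_sub_sq_mul_sin_sq_pos (hκ : κ ^ 2 < 1) (θ : ℝ) : 0 < 1 - κ ^ 2 * sin θ ^ 2 := by
  nlinarith [sin_sq_le_one θ, sq_nonneg κ]

lemma ellDelta_pos (hκ : κ ^ 2 < 1) (θ : ℝ) : 0 < ellDelta κ θ :=
  sqrt_pos.2 (one_sub_sq_mul_sin_sq_pos hκ θ)

lemma ellDelta_le_one (θ : ℝ) : ellDelta κ θ ≤ 1 :=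
  sqrt_le_one.2 (by nlinarith [sq_nonneg κ, sq_nonneg (sin θ)])

lemma ellDelta_sq (hκ : κ ^ 2 < 1) (θ : ℝ) : ellDelta κ θ ^ 2 = 1 - κ ^ 2 * sin θ ^ 2 :=
  sq_sqrt (one_sub_sq_mul_sin_sq_pos hκ θ).le

lemma continuous_ellDelta : Continuous (ellDelta κ) := by
  unfold ellDelta; fun_prop

lemma ellDelta_add_pi (θ : ℝ) : ellDelta κ (θ + π) = ellDelta κ θ := by
  simp [ellDelta, sin_add_pi]

lemma ellDelta_pi_sub (θ : ℝ) : ellDelta κ (π - θ) = ellDelta κ θ := by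
  simp [ellDelta, sin_pi_sub]

lemma hasDerivAt_ellDelta (hκ : κ ^ 2 < 1) (θ : ℝ) :
    HasDerivAt (ellDelta κ) (-(κ ^ 2 * sin θ * cos θ) / ellDelta κ θ) θ := by
  have h := (((hasDerivAt_sin θ).pow 2).const_mul (κ ^ 2)).const_sub 1
    |>.sqrt (one_sub_sq_mul_sin_sq_pos hκ θ).ne'
  convert h using 1
  · rfl
  · simp only [ellDelta, Pi.pow_apply]
    field_simp
    ring

lemma continuous_inv_ellDelta (hκ : κ ^ 2 < 1) : Continuous fun θ ↦ (ellDelta κ θ)⁻¹ :=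
  continuous_ellDelta.inv₀ fun θ ↦ (ellDelta_pos hκ θ).ne'

def ellF (κ θ : ℝ) : ℝ := ∫ t in (0 : ℝ)..θ, (ellDelta κ t)⁻¹

lemma hasDerivAt_ellF (hκ : κ ^ 2 < 1) (θ : ℝ) :
    HasDerivAt (ellF κ) (ellDelta κ θ)⁻¹ θ :=
  (continuous_inv_ellDelta hκ).integral_hasStrictDerivAt 0 θ |>.hasDerivAt

lemma strictMono_ellF (hκ : κ ^ 2 < 1) : StrictMono (ellF κ) :=
  strictMono_of_hasDerivAt_pos (hasDerivAt_ellF hκ) fun θ ↦ inv_pos.2 (ellDelta_pos hκ θ)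

lemma sub_le_ellF_sub (hκ : κ ^ 2 < 1) {a b : ℝ} (hab : a ≤ b) :
    b - a ≤ ellF κ b - ellF κ a := by
  rw [ellF, ellF, integral_interval_sub_left ((continuous_inv_ellDelta hκ).intervalIntegrable _ _)
    ((continuous_inv_ellDelta hκ).intervalIntegrable _ _)]
  simpa using integral_mono_on hab (intervalIntegrable_const (μ := MeasureTheory.volume))
    ((continuous_inv_ellDelta hκ).intervalIntegrable _ _)
    fun t _ ↦ (one_le_inv₀ (ellDelta_pos hκ t)).2 (ellDelta_le_one t)

lemma surjective_ellF (hκ : κ ^ 2 < 1) : Function.Surjective (ellF κ) := by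
  have h0 : ellF κ 0 = 0 := integral_same
  refine (hasDerivAt_ellF hκ · |>.continuousAt) |> continuous_iff_continuousAt.2 |>.surjective
    (tendsto_atTop_mono' _ (eventually_ge_atTop 0 |>.mono fun θ hθ ↦ ?_) tendsto_id)
    (tendsto_atBot_mono' _ (eventually_le_atBot 0 |>.mono fun θ hθ ↦ ?_) tendsto_id)
  · simpa [h0] using sub_le_ellF_sub hκ hθ
  · simpa [h0] using sub_le_ellF_sub hκ hθ

lemma ellF_pi_div_two : ellF κ (π / 2) = ellK κ := by
  simp [ellF, ellK, ellDelta, one_div]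

lemma ellF_add_pi (hκ : κ ^ 2 < 1) (θ : ℝ) : ellF κ (θ + π) = ellF κ θ + ellF κ π := by
  have hper : Function.Periodic (fun t ↦ (ellDelta κ t)⁻¹) π := fun t ↦ by
    simp only [ellDelta_add_pi]
  simpa [ellF] using hper.intervalIntegral_add_eq_add 0 θ
    fun _ _ ↦ (continuous_inv_ellDelta hκ).intervalIntegrable _ _

lemma ellF_pi (hκ : κ ^ 2 < 1) : ellF κ π = 2 * ellK κ := by
  have hreflect : ∫ t in π / 2..π, (ellDelta κ t)⁻¹ = ellK κ := by
    rw [← ellF_pi_div_two, ellF]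
    simpa [ellDelta_pi_sub, show π - π / 2 = π / 2 by ring] using
      (integral_comp_sub_left (fun t ↦ (ellDelta κ t)⁻¹) π (a := 0) (b := π / 2)).symm
  rw [ellF, ← integral_add_adjacent_intervals (b := π / 2)
    ((continuous_inv_ellDelta hκ).intervalIntegrable _ _)
    ((continuous_inv_ellDelta hκ).intervalIntegrable _ _), hreflect, ← ellF, ellF_pi_div_two]
  ring

lemma ellF_add_two_pi (hκ : κ ^ 2 < 1) (θ : ℝ) :
    ellF κ (θ + 2 * π) = ellF κ θ + 4 * ellK κ := by
  rw [two_mul, ← add_assoc, ellF_add_pi hκ, ellF_add_pi hκ, ellF_pi hκ]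
  ring

def jacobiAm (hκ : κ ^ 2 < 1) : ℝ ≃o ℝ :=
  (StrictMono.orderIsoOfSurjective _ (strictMono_ellF hκ) (surjective_ellF hκ)).symm

lemma jacobiAm_ellF (hκ : κ ^ 2 < 1) (θ : ℝ) : jacobiAm hκ (ellF κ θ) = θ :=
  StrictMono.orderIsoOfSurjective_symm_apply_self _ _ _ θ

lemma ellF_jacobiAm (hκ : κ ^ 2 < 1) (x : ℝ) : ellF κ (jacobiAm hκ x) = x :=
  StrictMono.orderIsoOfSurjective_self_symm_apply _ _ _ x

lemma hasDerivAt_jacobiAm (hκ : κ ^ 2 < 1) (x : ℝ) :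
    HasDerivAt (jacobiAm hκ) (ellDelta κ (jacobiAm hκ x)) x := by
  simpa using (hasDerivAt_ellF hκ _).of_local_left_inverse (jacobiAm hκ).continuous.continuousAt
    (inv_ne_zero (ellDelta_pos hκ _).ne') (Eventually.of_forall (ellF_jacobiAm hκ))

lemma jacobiAm_add_four_mul_ellK (hκ : κ ^ 2 < 1) (x : ℝ) :
    jacobiAm hκ (x + 4 * ellK κ) = jacobiAm hκ x + 2 * π := by
  rw [← jacobiAm_ellF hκ (jacobiAm hκ x + 2 * π), ellF_add_two_pi hκ, ellF_jacobiAm]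

def jacobiSn (hκ : κ ^ 2 < 1) (x : ℝ) : ℝ := sin (jacobiAm hκ x)

def jacobiCnDn (hκ : κ ^ 2 < 1) (x : ℝ) : ℝ := cos (jacobiAm hκ x) * ellDelta κ (jacobiAm hκ x)

lemma hasDerivAt_jacobiSn (hκ : κ ^ 2 < 1) (x : ℝ) :
    HasDerivAt (jacobiSn hκ) (jacobiCnDn hκ x) x :=
  (hasDerivAt_sin _).comp x (hasDerivAt_jacobiAm hκ x)

lemma hasDerivAt_jacobiCnDn (hκ : κ ^ 2 < 1) (x : ℝ) :
    HasDerivAt (jacobiCnDn hκ)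
      (2 * κ ^ 2 * jacobiSn hκ x ^ 3 - (1 + κ ^ 2) * jacobiSn hκ x) x := by
  set θ := jacobiAm hκ x with hθ
  refine ((hasDerivAt_cos θ).comp x (hasDerivAt_jacobiAm hκ x)).fun_mul
    ((hasDerivAt_ellDelta hκ θ).comp x (hasDerivAt_jacobiAm hκ x)) |>.congr_deriv ?_
  have hΔ := ellDelta_pos hκ θ
  simp only [Function.comp_apply, jacobiSn, ← hθ]
  field_simp
  linear_combination (-sin θ) * ellDelta_sq hκ θ - κ ^ 2 * sin θ * sin_sq_add_cos_sq θ

lemma jacobiSn_periodic (hκ : κ ^ 2 < 1) : Function.Periodic (jacobiSn hκ) (4 * ellK κ) := by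
  intro x
  rw [jacobiSn, jacobiAm_add_four_mul_ellK, sin_add_two_pi, jacobiSn]

lemma jacobiSn_zero (hκ : κ ^ 2 < 1) : jacobiSn hκ 0 = 0 := by
  simpa [jacobiSn, ellF] using congrArg sin (jacobiAm_ellF hκ 0)

lemma jacobiSn_ellK (hκ : κ ^ 2 < 1) : jacobiSn hκ (ellK κ) = 1 := by
  rw [jacobiSn, ← ellF_pi_div_two, jacobiAm_ellF, sin_pi_div_two]

lemma continuousOn_ellK : ContinuousOn ellK (Ioo (-1) 1) := by
  rw [continuousOn_iff_continuous_domRestrict]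
  refine continuous_parametric_intervalIntegral_of_continuous'
    (f := fun (κ : Ioo (-1 : ℝ) 1) t ↦ 1 / √(1 - (κ : ℝ) ^ 2 * sin t ^ 2)) ?_ 0 (π / 2)
  refine continuous_const.div (by fun_prop) fun p ↦ (sqrt_pos.2 ?_).ne'
  exact one_sub_sq_mul_sin_sq_pos ((sq_lt_one_iff_abs_lt_one _).2 (abs_lt.2 p.1.2)) _

lemma ellK_zero : ellK 0 = π / 2 := by
  simp [ellK]

lemma integral_inv_sqrt_add_sq {ε : ℝ} (hε : 0 < ε) (a : ℝ) :
    ∫ s in (0 : ℝ)..a, (√(ε + s ^ 2))⁻¹ = arsinh (a / √ε) := by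
  have hderiv (s : ℝ) : HasDerivAt (fun s ↦ arsinh (s / √ε)) (√(ε + s ^ 2))⁻¹ s := by
    refine ((hasDerivAt_arsinh _).comp s ((hasDerivAt_id s).div_const √ε)).congr_deriv ?_
    have h : √(1 + (s / √ε) ^ 2) * √ε = √(ε + s ^ 2) := by
      rw [div_pow, sq_sqrt hε.le, ← sqrt_mul (by positivity)]
      field_simp
    rw [← h, id]
    field_simp
  rw [integral_eq_sub_of_hasDerivAt (fun s _ ↦ hderiv s)
    (((continuous_const.add (continuous_pow 2)).sqrt.inv₀ fun s ↦
      (sqrt_pos.2 (add_pos_of_pos_of_nonneg hε (sq_nonneg s))).ne').intervalIntegrable _ _)]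
  simp

lemma arsinh_le_ellK (hκ : κ ^ 2 < 1) : arsinh (π / 2 / √(1 - κ ^ 2)) ≤ ellK κ := by
  have hε : 0 < 1 - κ ^ 2 := sub_pos.2 hκ
  have hcont : Continuous fun t ↦ (√(1 - κ ^ 2 + (π / 2 - t) ^ 2))⁻¹ :=
    (continuous_const.add ((continuous_const.sub continuous_id).pow 2)).sqrt.inv₀ fun t ↦
      (sqrt_pos.2 (add_pos_of_pos_of_nonneg hε (sq_nonneg _))).ne'
  have hreflect : ∫ t in (0 : ℝ)..π / 2, (√(1 - κ ^ 2 + (π / 2 - t) ^ 2))⁻¹ =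
      arsinh (π / 2 / √(1 - κ ^ 2)) := by
    rw [integral_comp_sub_left (fun s ↦ (√(1 - κ ^ 2 + s ^ 2))⁻¹), sub_self, sub_zero,
      integral_inv_sqrt_add_sq hε]
  rw [← hreflect, ← ellF_pi_div_two, ellF]
  -- `1 - κ² sin² t = (1 - κ²) + κ² cos² t` and `|cos t| = |sin (π/2 - t)| ≤ |π/2 - t|`
  refine integral_mono_on (by positivity) (hcont.intervalIntegrable _ _)
    ((continuous_inv_ellDelta hκ).intervalIntegrable _ _) fun t _ ↦
    inv_anti₀ (ellDelta_pos hκ t) (sqrt_le_sqrt ?_)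
  have hcos : cos t ^ 2 ≤ (π / 2 - t) ^ 2 := by
    simpa [sin_pi_div_two_sub] using sin_sq_le_sq (x := π / 2 - t)
  nlinarith [sin_sq_add_cos_sq t, sq_nonneg (cos t)]

lemma tendsto_ellK_nhdsLT_one : Tendsto ellK (𝓝[<] 1) atTop := by
  have hsqrt : Tendsto (fun κ : ℝ ↦ √(1 - κ ^ 2)) (𝓝[<] 1) (𝓝[>] 0) := by
    refine tendsto_nhdsWithin_iff.2 ⟨?_, ?_⟩
    · simpa using (continuous_const.sub (continuous_pow 2) : Continuous fun κ : ℝ ↦ 1 - κ ^ 2)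
        |>.sqrt.tendsto 1
        |>.mono_left nhdsWithin_le_nhds
    · filter_upwards [Ioo_mem_nhdsLT (show (-1 : ℝ) < 1 by norm_num)] with κ hκ
      exact sqrt_pos.2 (by nlinarith [hκ.1, hκ.2])
  have harsinh : Tendsto arsinh atTop atTop :=
    tendsto_atTop_atTop_of_monotone arsinh_strictMono.monotone fun b ↦ ⟨sinh b, (arsinh_sinh b).ge⟩
  have hpi : (0 : ℝ) < π / 2 := by positivity
  refine tendsto_atTop_mono' _ ?_
    (harsinh.comp ((tendsto_inv_nhdsGT_zero.comp hsqrt).const_mul_atTop hpi))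
  filter_upwards [Ioo_mem_nhdsLT (show (-1 : ℝ) < 1 by norm_num)] with κ hκ
  simpa [div_eq_mul_inv] using arsinh_le_ellK (κ := κ) (by nlinarith [hκ.1, hκ.2])

lemma exists_four_mul_sqrt_mul_ellK_eq {y : ℝ} (hy : 2 * π < y) :
    ∃ κ, 0 < κ ∧ κ < 1 ∧ 4 * √(1 + κ ^ 2) * ellK κ = y := by
  have hcoeff : Continuous fun κ : ℝ ↦ 4 * √(1 + κ ^ 2) := by fun_prop
  have htend : Tendsto (fun κ ↦ 4 * √(1 + κ ^ 2) * ellK κ) (𝓝[<] 1) atTop :=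
    (hcoeff.tendsto 1 |>.mono_left nhdsWithin_le_nhds).pos_mul_atTop (by positivity)
      tendsto_ellK_nhdsLT_one
  obtain ⟨b, hyb, hb⟩ :=
    ((htend.eventually_ge_atTop y).and (Ioo_mem_nhdsLT zero_lt_one)).exists
  have hcont : ContinuousOn (fun κ ↦ 4 * √(1 + κ ^ 2) * ellK κ) (Icc 0 b) :=
    hcoeff.continuousOn.mul (continuousOn_ellK.mono (Icc_subset_Ioo (by norm_num) hb.2))
  obtain ⟨κ, hκ, hκy⟩ := intermediate_value_Ioc hb.1.le hcont
    ⟨by norm_num [ellK_zero]; linarith, hyb⟩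
  exact ⟨κ, hκ.1, hκ.2.trans_lt hb.2, hκy⟩

end

end JacobiElliptic

section Rescaling

variable {s s' : ℝ → ℝ}

lemma hasDerivAt_const_mul_comp_mul (hs : ∀ x, HasDerivAt s (s' x) x) (A c φ : ℝ) :
    HasDerivAt (fun φ ↦ A * s (c * φ)) (A * c * s' (c * φ)) φ := by
  simpa [mul_assoc, mul_comm c] using
    ((hs (c * φ)).comp φ ((hasDerivAt_id φ).const_mul c)).const_mul A

lemma hasDerivAt_ginzburgLandau_of_jacobi {κ γ A c : ℝ}
    (hs' : ∀ x, HasDerivAt s' (2 * κ ^ 2 * s x ^ 3 - (1 + κ ^ 2) * s x) x)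
    (hA : A ^ 2 * (1 + κ ^ 2) = 2 * κ ^ 2) (hc : c ^ 2 * γ * (1 + κ ^ 2) = 1) (φ : ℝ) :
    HasDerivAt (fun φ ↦ A * c * s' (c * φ)) (((A * s (c * φ)) ^ 3 - A * s (c * φ)) / γ) φ := by
  refine (hasDerivAt_const_mul_comp_mul hs' (A * c) c φ).congr_deriv ?_
  have hγ : γ ≠ 0 := by rintro rfl; simp at hc
  field_simp
  linear_combination (-(A * s (c * φ) ^ 3 * c ^ 2 * γ)) * hA
    + (A ^ 3 * s (c * φ) ^ 3 - A * s (c * φ)) * hc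

end Rescaling

open JacobiElliptic

theorem statement11_general (M : ℕ) (γt : ℝ) (hγ0 : 0 < γt)
    (hγ1 : γt < 1 / (M:ℝ)^2) :
    ∃ κ : ℝ, 0 < κ ∧ κ < 1 ∧
      4 * Real.sqrt (1 + κ^2) * ellK κ = 2 * Real.pi / (M * Real.sqrt γt) ∧
      ∃ u v : ℝ → ℝ,
        (∀ φ, HasDerivAt u (v φ) φ) ∧
        (∀ φ, HasDerivAt v ((u φ ^ 3 - u φ) / γt) φ) ∧
        (∃ a b : ℝ, u a ≠ u b) ∧
        Function.Periodic u (2 * Real.pi / M) ∧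
        IsGreatest (Set.range u) (Real.sqrt (2 * κ^2 / (1 + κ^2))) := by
  have hMpos : 0 < (M : ℝ) :=
    Nat.cast_pos.2 (Nat.pos_of_ne_zero (by rintro rfl; norm_num at hγ1; linarith))
  have hMγ : M * √γt < 1 := by
    have h : (M : ℝ) ^ 2 * γt < 1 := by rwa [lt_div_iff₀' (by positivity)] at hγ1
    nlinarith [sq_sqrt hγ0.le, sqrt_nonneg γt]
  obtain ⟨κ, hκ0, hκ1, hκK⟩ := exists_four_mul_sqrt_mul_ellK_eq (y := 2 * π / (M * √γt))
    (by rw [lt_div_iff₀ (by positivity)]; nlinarith [pi_pos])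
  have hκ : κ ^ 2 < 1 := by nlinarith
  set A := √(2 * κ ^ 2 / (1 + κ ^ 2))
  set c := (√(γt * (1 + κ ^ 2)))⁻¹ with hcdef
  have hA : A ^ 2 * (1 + κ ^ 2) = 2 * κ ^ 2 := by
    rw [sq_sqrt (by positivity)]; field_simp
  have hc : c ^ 2 * γt * (1 + κ ^ 2) = 1 := by
    rw [inv_pow, sq_sqrt (by positivity)]; field_simp
  have hperiod : c * (2 * π / M) = 4 * ellK κ := by
    have : 4 * ellK κ = 2 * π / (M * √γt) / √(1 + κ ^ 2) := by
      rw [← hκK]; field_simp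
    rw [this, hcdef, sqrt_mul hγ0.le]; field_simp
  have hcK : c * (ellK κ / c) = ellK κ := mul_div_cancel₀ _ (by positivity)
  refine ⟨κ, hκ0, hκ1, hκK, fun φ ↦ A * jacobiSn hκ (c * φ),
    fun φ ↦ A * c * jacobiCnDn hκ (c * φ),
    hasDerivAt_const_mul_comp_mul (hasDerivAt_jacobiSn hκ) A c,
    hasDerivAt_ginzburgLandau_of_jacobi (hasDerivAt_jacobiCnDn hκ) hA hc,
    ⟨ellK κ / c, 0, ?_⟩, fun φ ↦ ?_, ⟨ellK κ / c, ?_⟩, ?_⟩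
  · simp [hcK, jacobiSn_ellK, jacobiSn_zero]
    positivity
  · simp only [mul_add, hperiod, jacobiSn_periodic hκ _]
  · simp [hcK, jacobiSn_ellK, A]
  · rintro _ ⟨φ, rfl⟩
    exact mul_le_of_le_one_right (sqrt_nonneg _) (sin_le_one _)

/-- for every integer `M ≥ 1` and every `γ̃ ∈ (0, 1/M²)` there exist
`κ ∈ (0,1)` with `4√(1+κ²)K(κ) = 2π/(M√γ̃)` and a nonconstant periodic solution of
`γ̃ u″ = u³ − u` of period `2π/M` with amplitude `max u = √(2κ²/(1+κ²))`. -/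
theorem statement11 (M : ℕ) (hM : 1 ≤ M) (γt : ℝ) (hγ0 : 0 < γt)
    (hγ1 : γt < 1 / (M:ℝ)^2) :
    ∃ κ : ℝ, 0 < κ ∧ κ < 1 ∧
      4 * Real.sqrt (1 + κ^2) * ellK κ = 2 * Real.pi / (M * Real.sqrt γt) ∧
      ∃ u v : ℝ → ℝ,
        (∀ φ, HasDerivAt u (v φ) φ) ∧
        (∀ φ, HasDerivAt v ((u φ ^ 3 - u φ) / γt) φ) ∧
        (∃ a b : ℝ, u a ≠ u b) ∧
        Function.Periodic u (2 * Real.pi / M) ∧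
        IsGreatest (Set.range u) (Real.sqrt (2 * κ^2 / (1 + κ^2))) :=
  statement11_general M γt hγ0 hγ1
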